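/- Let k ≥ 1 and let D be a digraph with χ⃗(D) ≥ k + 1. Let (X1, X2) be a dicut of D of size at most k (arcs going from X1 to X2) such that D[X1] and D[X2] are both k-dicolourable, and let φ1 and φ2 be k-dicolourings of D[X1] and D[X2] respectively. Then either there exists a unique colour i such that every arc of the dicut leaves a vertex of φ1⁻¹(i), and in that case for every colour j ∈ {1,…,k} there is exactly one arc from φ1⁻¹(i) to φ2⁻¹(j) and at least one arc from φ2⁻¹(j) back to φ1⁻¹(i); or symmetrically there exists a unique colour j such that every arc of the dicut enters a vertex of φ2⁻¹(j), and in that case for every colour i ∈ {1,…,k} there is exactly one arc from φ1⁻¹(i) to φ2⁻¹(j) and at least one arc from φ2⁻¹(j) back to φ1⁻¹(i). In particular the dicut (X1, X2) has size exactly k. -/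

import Mathlib

/-!
Common framework: finite digraphs on vertex set a `Finset ℕ`,
loopless and without parallel arcs (arcs are a `Finset (ℕ × ℕ)`).
-/

structure Dgraph where
  verts : Finset ℕ
  arcs : Finset (ℕ × ℕ)

namespace Dgraph

/-- Well-formedness: every arc joins two distinct vertices of the digraph
(no loops, arcs within the vertex set). -/
def WF (D : Dgraph) : Prop :=
  ∀ a ∈ D.arcs, a.1 ∈ D.verts ∧ a.2 ∈ D.verts ∧ a.1 ≠ a.2

/-- `p` is a directed path from `u` to `v` in `D` (vertices pairwise distinct,
consecutive pairs are arcs). -/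
def IsDipath (D : Dgraph) (p : List ℕ) (u v : ℕ) : Prop :=
  p.Nodup ∧ p.head? = some u ∧ p.getLast? = some v ∧
    (∀ x ∈ p, x ∈ D.verts) ∧ p.Chain' (fun a b => (a, b) ∈ D.arcs)

/-- The set of arcs used by a path (consecutive pairs). -/
def arcsOf (p : List ℕ) : Finset (ℕ × ℕ) := (p.zip p.tail).toFinset

/-- Local arc-connectivity `λ(u,v)`: the maximum number of pairwise
arc-disjoint directed paths from `u` to `v`. -/
noncomputable def locLam (D : Dgraph) (u v : ℕ) : ℕ :=
  sSup {n | ∃ P : Fin n → List ℕ, (∀ i, D.IsDipath (P i) u v) ∧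
    Pairwise fun i j => Disjoint (arcsOf (P i)) (arcsOf (P j))}

/-- Maximum local arc-connectivity `λ(D)`. -/
noncomputable def lam (D : Dgraph) : ℕ :=
  sSup {n | ∃ u ∈ D.verts, ∃ v ∈ D.verts, u ≠ v ∧ n = D.locLam u v}

/-- `p` is a directed cycle of `D` (cyclically consecutive pairs are arcs,
vertices pairwise distinct). -/
def IsDicycle (D : Dgraph) (p : List ℕ) : Prop :=
  2 ≤ p.length ∧ p.Nodup ∧ (∀ x ∈ p, x ∈ D.verts) ∧
    p.Chain' (fun a b => (a, b) ∈ D.arcs) ∧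
    ∀ x y, p.getLast? = some x → p.head? = some y → (x, y) ∈ D.arcs

/-- A colouring `φ` of the vertices with `k` colours is a `k`-dicolouring if
no directed cycle is monochromatic, i.e. every colour class induces an
acyclic subdigraph. -/
def IsDicolouring (D : Dgraph) (k : ℕ) (φ : ℕ → Fin k) : Prop :=
  ∀ p, D.IsDicycle p → ¬∃ c, ∀ x ∈ p, φ x = c

/-- The dichromatic number: least `k` admitting a `k`-dicolouring. -/
noncomputable def dichi (D : Dgraph) : ℕ :=
  sInf {k | ∃ φ : ℕ → Fin k, D.IsDicolouring k φ}

/-- A monochromatic list of vertices. -/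
def Mono {k : ℕ} (φ : ℕ → Fin k) (p : List ℕ) : Prop := ∃ c, ∀ x ∈ p, φ x = c

/-- `D` is strong: any vertex can reach any other by a directed path. -/
def Strong (D : Dgraph) : Prop :=
  ∀ u ∈ D.verts, ∀ v ∈ D.verts, u ≠ v → ∃ p, D.IsDipath p u v

/-- Induced subdigraph on `S`. -/
def induce (D : Dgraph) (S : Finset ℕ) : Dgraph where
  verts := D.verts ∩ S
  arcs := D.arcs.filter fun a => a.1 ∈ S ∧ a.2 ∈ S

/-- Adjacency in the underlying undirected graph. -/
def adj (D : Dgraph) (x y : ℕ) : Prop := (x, y) ∈ D.arcs ∨ (y, x) ∈ D.arcs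

/-- Reachability in the underlying undirected graph. -/
def UReach (D : Dgraph) (x y : ℕ) : Prop := Relation.ReflTransGen D.adj x y

/-- Connectivity of the underlying undirected graph. -/
def UConnected (D : Dgraph) : Prop :=
  D.verts.Nonempty ∧ ∀ u ∈ D.verts, ∀ v ∈ D.verts, D.UReach u v

/-- Deletion of a vertex. -/
def delVert (D : Dgraph) (v : ℕ) : Dgraph := D.induce (D.verts.erase v)

/-- `v` is a cutvertex: its removal disconnects the underlying graph. -/
def IsCutvertex (D : Dgraph) (v : ℕ) : Prop :=
  v ∈ D.verts ∧ ¬(D.delVert v).UConnected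

/-- Biconnected: the underlying graph is connected and has no cutvertex. -/
def Biconnected (D : Dgraph) : Prop :=
  D.UConnected ∧ ∀ v, ¬D.IsCutvertex v

/-- `D` is `k`-extremal: biconnected, strong and `χ⃗(D) = λ(D) + 1 = k + 1`. -/
def Extremal (k : ℕ) (D : Dgraph) : Prop :=
  D.Biconnected ∧ D.Strong ∧ D.dichi = k + 1 ∧ D.lam = k

/-- The arcs of the dicut `(X, X̄)`: arcs from `X` to its complement. -/
def dicutArcs (D : Dgraph) (X : Finset ℕ) : Finset (ℕ × ℕ) :=
  D.arcs.filter fun a => a.1 ∈ X ∧ a.2 ∉ X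

/-- `X` is the side of a dicut: `∅ ≠ X ⊊ V(D)`. -/
def IsDicutSide (D : Dgraph) (X : Finset ℕ) : Prop :=
  X ⊆ D.verts ∧ X.Nonempty ∧ X ≠ D.verts

/-- `(X, X̄)` is a minimum dicut of `D`. -/
def IsMinDicut (D : Dgraph) (X : Finset ℕ) : Prop :=
  D.IsDicutSide X ∧ ∀ Y, D.IsDicutSide Y → (D.dicutArcs X).card ≤ (D.dicutArcs Y).card

def outdeg (D : Dgraph) (v : ℕ) : ℕ := (D.arcs.filter fun a => a.1 = v).card
def indeg (D : Dgraph) (v : ℕ) : ℕ := (D.arcs.filter fun a => a.2 = v).card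

/-- Eulerian: every vertex has equal in- and out-degree. -/
def Eulerian (D : Dgraph) : Prop := ∀ v ∈ D.verts, D.outdeg v = D.indeg v

/-- Deleting a set of arcs. -/
def delArcs (D : Dgraph) (s : Finset (ℕ × ℕ)) : Dgraph := ⟨D.verts, D.arcs \ s⟩

/-- Adding an arc. -/
def addArc (D : Dgraph) (u v : ℕ) : Dgraph :=
  ⟨insert u (insert v D.verts), insert (u, v) D.arcs⟩

/-- `D` is `m`-dicritical: `χ⃗(D) = m` and deleting any arc drops the
dichromatic number to at most `m - 1`. -/
def Dicritical (m : ℕ) (D : Dgraph) : Prop :=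
  D.dichi = m ∧ ∀ a ∈ D.arcs, (D.delArcs {a}).dichi ≤ m - 1

/-- Renaming a vertex `x` to `y`. -/
def ren (x y z : ℕ) : ℕ := if z = x then y else z

def renArc (x y : ℕ) (a : ℕ × ℕ) : ℕ × ℕ := (ren x y a.1, ren x y a.2)

/-- Cyclically consecutive pairs of a list: the arcs of the directed cycle
through `p` in this cyclic order. -/
def cycArcs (p : List ℕ) : Finset (ℕ × ℕ) := (p.zip (p.rotate 1)).toFinset

/-- `D` is a directed cycle. -/
def IsDirectedCycleGraph (D : Dgraph) : Prop :=
  ∃ p : List ℕ, 2 ≤ p.length ∧ p.Nodup ∧ D.verts = p.toFinset ∧ D.arcs = cycArcs p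

/-- `D` is the bidirected complete digraph `↔K_n`. -/
def IsBiComplete (D : Dgraph) (n : ℕ) : Prop :=
  D.verts.card = n ∧ D.arcs = (D.verts ×ˢ D.verts).filter fun a => a.1 ≠ a.2

/-- Arcs of a bidirected (symmetric) cycle through `p`. -/
def symmCyc (p : List ℕ) : Finset (ℕ × ℕ) := cycArcs p ∪ (cycArcs p).image Prod.swap

/-- `D` is a symmetric odd wheel: a bidirected odd cycle (≥ 3 vertices)
plus a hub joined by digons to all cycle vertices. -/
def IsSymOddWheel (D : Dgraph) : Prop :=
  ∃ (p : List ℕ) (x : ℕ), 3 ≤ p.length ∧ Odd p.length ∧ p.Nodup ∧ x ∉ p ∧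
    D.verts = insert x p.toFinset ∧
    D.arcs = symmCyc p ∪ p.toFinset.image (fun y => (x, y)) ∪
      p.toFinset.image (fun y => (y, x))

/-- A fresh vertex not in `D`. -/
def fresh (D : Dgraph) : ℕ := (D.verts.sup id) + 1

/-- Contraction `D/X`: `X` is contracted into a single new vertex; arcs
inside `X` are deleted and parallel arcs created by contraction are
identified. -/
def contract (D : Dgraph) (X : Finset ℕ) : Dgraph where
  verts := insert (fresh D) (D.verts \ X)
  arcs := (D.arcs.image fun a =>
      (if a.1 ∈ X then fresh D else a.1, if a.2 ∈ X then fresh D else a.2)).filter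
      fun a => a.1 ≠ a.2

/-- `D` is the directed Hajós join of `D1` and `D2` with respect to the arcs
`(u,v1) ∈ A(D1)` and `(v2,w) ∈ A(D2)`, the vertices `v1, v2` being
identified into the new vertex `v`, and the arc `(u,w)` being added. -/
def IsDirHajosJoinAt (D D1 D2 : Dgraph) (u v1 v2 w v : ℕ) : Prop :=
  D1.WF ∧ D2.WF ∧ Disjoint D1.verts D2.verts ∧
  (u, v1) ∈ D1.arcs ∧ (v2, w) ∈ D2.arcs ∧
  v ∉ (D1.verts.erase v1) ∪ (D2.verts.erase v2) ∧
  D.verts = insert v ((D1.verts.erase v1) ∪ (D2.verts.erase v2)) ∧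
  D.arcs = insert (u, w)
    (((D1.arcs.erase (u, v1)) ∪ (D2.arcs.erase (v2, w))).image
      fun a => renArc v2 v (renArc v1 v a))

def IsDirHajosJoin (D D1 D2 : Dgraph) : Prop :=
  ∃ u v1 v2 w v, IsDirHajosJoinAt D D1 D2 u v1 v2 w v

/-- Bidirected Hajós join with respect to the digons `[u,v1] ⊆ A(D1)` and
`[w,v2] ⊆ A(D2)`. -/
def IsBidirHajosJoinAt (D D1 D2 : Dgraph) (u v1 v2 w v : ℕ) : Prop :=
  D1.WF ∧ D2.WF ∧ Disjoint D1.verts D2.verts ∧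
  (u, v1) ∈ D1.arcs ∧ (v1, u) ∈ D1.arcs ∧ (w, v2) ∈ D2.arcs ∧ (v2, w) ∈ D2.arcs ∧
  v ∉ (D1.verts.erase v1) ∪ (D2.verts.erase v2) ∧
  D.verts = insert v ((D1.verts.erase v1) ∪ (D2.verts.erase v2)) ∧
  D.arcs = insert (u, w) (insert (w, u)
    (((D1.arcs \ {(u, v1), (v1, u)}) ∪ (D2.arcs \ {(w, v2), (v2, w)})).image
      fun a => renArc v2 v (renArc v1 v a)))

def IsBidirHajosJoin (D D1 D2 : Dgraph) : Prop :=
  ∃ u v1 v2 w v, IsBidirHajosJoinAt D D1 D2 u v1 v2 w v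

/-- Hajós bijoin of `D1` and `D2` with respect to `((t,a1,w),(v,a2,u))`:
`ta1, a1w ∈ A(D1)` with `t,w` in the same connected component of `D1 ∖ a1`,
`va2, a2u ∈ A(D2)` with `u,v` in the same connected component of `D2 ∖ a2`;
`a1` and `a2` are identified into the new vertex `a` and the arcs
`tu` and `vw` are added. -/
def IsHajosBijoinAt (D D1 D2 : Dgraph) (t a1 w v a2 u a : ℕ) : Prop :=
  D1.WF ∧ D2.WF ∧ Disjoint D1.verts D2.verts ∧
  (t, a1) ∈ D1.arcs ∧ (a1, w) ∈ D1.arcs ∧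
  (v, a2) ∈ D2.arcs ∧ (a2, u) ∈ D2.arcs ∧
  (D1.delVert a1).UReach t w ∧
  (D2.delVert a2).UReach u v ∧
  a ∉ (D1.verts.erase a1) ∪ (D2.verts.erase a2) ∧
  D.verts = insert a ((D1.verts.erase a1) ∪ (D2.verts.erase a2)) ∧
  D.arcs = insert (t, u) (insert (v, w)
    (((D1.arcs \ {(t, a1), (a1, w)}) ∪ (D2.arcs \ {(v, a2), (a2, u)})).image
      fun x => renArc a2 a (renArc a1 a x)))

def IsHajosBijoin (D D1 D2 : Dgraph) : Prop :=
  ∃ t a1 w v a2 u a, IsHajosBijoinAt D D1 D2 t a1 w v a2 u a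

/-! ### Trees, Euler tours and Hajós tree joins -/

/-- Vertex set of the tree given by edges `e : Fin n → ℕ × ℕ`. -/
def treeVerts (n : ℕ) (e : Fin n → ℕ × ℕ) : Finset ℕ :=
  Finset.univ.image (fun i => (e i).1) ∪ Finset.univ.image (fun i => (e i).2)

/-- The bidirected digraph `↔T` of the tree. -/
def treeDigraph (n : ℕ) (e : Fin n → ℕ × ℕ) : Dgraph where
  verts := treeVerts n e
  arcs := Finset.univ.image (fun i : Fin n => e i) ∪
    Finset.univ.image (fun i : Fin n => (e i).swap)

/-- `e` lists the edges of a tree: loopless, pairwise distinct edges,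
connected, with `n + 1` vertices for `n` edges. -/
def IsTree (n : ℕ) (e : Fin n → ℕ × ℕ) : Prop :=
  (∀ i, (e i).1 ≠ (e i).2) ∧
  (∀ i j, i ≠ j → e i ≠ e j ∧ e i ≠ (e j).swap) ∧
  (treeDigraph n e).UConnected ∧
  (treeVerts n e).card = n + 1

/-- The leaves of the tree: vertices incident to exactly one edge. -/
def leafSet (n : ℕ) (e : Fin n → ℕ × ℕ) : Finset ℕ :=
  (treeVerts n e).filter fun x =>
    (Finset.univ.filter fun i : Fin n => (e i).1 = x ∨ (e i).2 = x).card = 1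

/-- `L` is an Eulerian list of the tree: the cyclic sequence of consecutive
pairs of `L` traverses each arc of `↔T` exactly once. -/
def IsEulerTour (n : ℕ) (e : Fin n → ℕ × ℕ) (L : List ℕ) : Prop :=
  ((L.zip (L.rotate 1) : List (ℕ × ℕ)) : Multiset (ℕ × ℕ)) = (treeDigraph n e).arcs.val

/-- `C` is a partial Eulerian list: a circular sublist of an Eulerian list
containing every leaf, in which every non-leaf vertex appears at most once. -/
def IsPartialEulerList (n : ℕ) (e : Fin n → ℕ × ℕ) (C : List ℕ) : Prop :=
  ∃ L m, IsEulerTour n e L ∧ List.Sublist C (L.rotate m) ∧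
    (∀ x ∈ leafSet n e, x ∈ C) ∧
    ∀ x ∈ C, x ∉ leafSet n e → C.count x ≤ 1

/-- Compatibility of the data of a (extended) Hajós tree join:
a tree with edges `uᵢvᵢ = e i`, digraphs `Ds i` with
`V(Ds i) ∩ V(T) = {uᵢ, vᵢ}`, `[uᵢ,vᵢ] ⊆ A(Ds i)` and whose remaining
vertex sets are pairwise disjoint. -/
def JoinCompat (n : ℕ) (e : Fin n → ℕ × ℕ) (Ds : Fin n → Dgraph) : Prop :=
  IsTree n e ∧ (∀ i, (Ds i).WF) ∧
  (∀ i, (Ds i).verts ∩ treeVerts n e = {(e i).1, (e i).2}) ∧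
  (∀ i, e i ∈ (Ds i).arcs ∧ (e i).swap ∈ (Ds i).arcs) ∧
  (∀ i j, i ≠ j →
    Disjoint ((Ds i).verts \ {(e i).1, (e i).2}) ((Ds j).verts \ {(e j).1, (e j).2}))

/-- The digraph obtained from the digraphs `Ds i − [uᵢ,vᵢ]` by adding the
directed cycle through the list `C`. -/
def joinOf (n : ℕ) (e : Fin n → ℕ × ℕ) (Ds : Fin n → Dgraph) (C : List ℕ) : Dgraph where
  verts := Finset.univ.biUnion fun i => (Ds i).verts
  arcs := (Finset.univ.biUnion fun i => (Ds i).arcs \ {e i, (e i).swap}) ∪ cycArcs C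

/-- `D` is the Hajós tree join `T(D₁, …, Dₙ; C)`: the peripheral cycle runs
through the leaves of `T` in the circular order given by a plane embedding
of `T` (equivalently, the order of the leaves along an Euler tour of `↔T`). -/
def IsHajosTreeJoin (D : Dgraph) (n : ℕ) (e : Fin n → ℕ × ℕ)
    (Ds : Fin n → Dgraph) : Prop :=
  JoinCompat n e Ds ∧ ∃ L, IsEulerTour n e L ∧
    D = joinOf n e Ds (L.filter fun x => decide (x ∈ leafSet n e))

/-- `D` is an extended Hajós tree join: the peripheral cycle runs through a
partial Eulerian list of `T`. -/
def IsExtHajosTreeJoin (D : Dgraph) (n : ℕ) (e : Fin n → ℕ × ℕ)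
    (Ds : Fin n → Dgraph) : Prop :=
  JoinCompat n e Ds ∧ ∃ C, IsPartialEulerList n e C ∧ D = joinOf n e Ds C

/-- Hajós star join: a Hajós tree join whose tree is a star. -/
def IsHajosStarJoin (D : Dgraph) (n : ℕ) (e : Fin n → ℕ × ℕ)
    (Ds : Fin n → Dgraph) : Prop :=
  IsHajosTreeJoin D n e Ds ∧ ∃ c, ∀ i, (e i).1 = c ∨ (e i).2 = c

/-- The class `H⃗_k`: for `k = 3` the smallest class containing the symmetric
odd wheels and closed under directed Hajós joins and Hajós tree joins; for
`k ≥ 4` the smallest class containing `↔K_{k+1}` and closed under directed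
Hajós joins and Hajós tree joins. -/
inductive HClass (k : ℕ) : Dgraph → Prop
  | wheel (D : Dgraph) (hk : k = 3) (h : IsSymOddWheel D) : HClass k D
  | complete (D : Dgraph) (hk : 4 ≤ k) (h : IsBiComplete D (k + 1)) : HClass k D
  | dirJoin (D D1 D2 : Dgraph) (h1 : HClass k D1) (h2 : HClass k D2)
      (h : IsDirHajosJoin D D1 D2) : HClass k D
  | treeJoin (D : Dgraph) (n : ℕ) (e : Fin n → ℕ × ℕ) (Ds : Fin n → Dgraph)
      (h : ∀ i, HClass k (Ds i)) (hj : IsHajosTreeJoin D n e Ds) : HClass k D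

/-- The class `EH⃗T_k`: for `k = 3` the smallest class containing the
symmetric odd wheels and closed under extended Hajós tree joins; for `k ≥ 4`
the smallest class containing `↔K_{k+1}` and closed under extended Hajós
tree joins. -/
inductive EHTClass (k : ℕ) : Dgraph → Prop
  | wheel (D : Dgraph) (hk : k = 3) (h : IsSymOddWheel D) : EHTClass k D
  | complete (D : Dgraph) (hk : 4 ≤ k) (h : IsBiComplete D (k + 1)) : EHTClass k D
  | extJoin (D : Dgraph) (n : ℕ) (e : Fin n → ℕ × ℕ) (Ds : Fin n → Dgraph)
      (h : ∀ i, EHTClass k (Ds i)) (hj : IsExtHajosTreeJoin D n e Ds) : EHTClass k D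

/-- Parallel Hajós join of `D_AC` and `D_B` with respect to
`(t, u, v, w, [a,b])`. -/
def IsParallelHajosJoinAt (D DAC DB : Dgraph) (A C : Finset ℕ)
    (x t u v w a b : ℕ) : Prop :=
  DAC.WF ∧ DB.WF ∧
  (a, b) ∈ DB.arcs ∧ (b, a) ∈ DB.arcs ∧
  DAC.verts = A ∪ C ∧ A ∩ C = {x} ∧
  t ∈ A.erase x ∧ w ∈ A.erase x ∧ u ∈ C.erase x ∧ v ∈ C.erase x ∧
  (t, u) ∈ DAC.arcs ∧ (v, w) ∈ DAC.arcs ∧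
  (DAC.delVert x).UReach t w ∧
  ((DAC.induce C).delVert x).UReach u v ∧
  Disjoint DAC.verts DB.verts ∧
  D.verts = DB.verts ∪ (A.erase x) ∪ (C.erase x) ∧
  D.arcs = insert (t, u) (insert (v, w)
    ((DB.arcs \ {(a, b), (b, a)}) ∪
      ((DAC.induce A).arcs.image (renArc x a)) ∪
      ((DAC.induce C).arcs.image (renArc x b))))

def IsParallelHajosJoin (D DAC DB : Dgraph) : Prop :=
  ∃ A C x t u v w a b, IsParallelHajosJoinAt D DAC DB A C x t u v w a b

/-- `S` is (the vertex set of) a strong component of `D`. -/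
def IsStrongComponent (D : Dgraph) (S : Finset ℕ) : Prop :=
  S ⊆ D.verts ∧ S.Nonempty ∧ (D.induce S).Strong ∧
  ∀ S', S ⊆ S' → S' ⊆ D.verts → (D.induce S').Strong → S' = S

/-- `B` is (the vertex set of) a block of `D`: a maximal set inducing a
biconnected subdigraph. -/
def IsBlock (D : Dgraph) (B : Finset ℕ) : Prop :=
  B ⊆ D.verts ∧ (D.induce B).Biconnected ∧
  ∀ B', B ⊆ B' → B' ⊆ D.verts → (D.induce B').Biconnected → B' = B

end Dgraph

open Dgraph

open Dgraph


section Helpers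

variable {α : Type*}

lemma myChain'_mem {R : α → α → Prop} {M : α → Prop} :
    ∀ (q : List α), q.Chain' R → (∀ x ∈ q, M x) →
      q.Chain' (fun a b => R a b ∧ M a ∧ M b) := by
  intro q
  induction q with
  | nil => intro _ _; exact List.isChain_nil
  | cons a t ih =>
    intro h hm
    cases t with
    | nil => exact List.isChain_singleton _
    | cons b s =>
      simp only [List.Chain', List.isChain_cons_cons] at h ⊢
      exact ⟨⟨h.1, hm a (by simp), hm b (by simp)⟩,
        ih h.2 (fun x hx => hm x (List.mem_cons_of_mem _ hx))⟩

lemma myCross_head {R : α → α → Prop} {P : α → Prop} :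
    ∀ (q : List α), q.Chain' R → (∀ z ∈ q.head?, P z) →
      (∀ y ∈ q, P y) ∨ ∃ a b, R a b ∧ P a ∧ ¬ P b := by
  intro q
  induction q with
  | nil => intro _ _; left; simp
  | cons a t ih =>
    intro h hm
    have hPa : P a := hm a rfl
    cases t with
    | nil =>
      left; intro y hy; simp at hy; subst hy; exact hPa
    | cons b s =>
      simp only [List.Chain', List.isChain_cons_cons] at h
      by_cases hPb : P b
      · rcases ih h.2 (by intro z hz; simp at hz; subst hz; exact hPb) with hall | hcr
        · left; intro y hy
          rcases List.mem_cons.mp hy with rfl | hy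
          · exact hPa
          · exact hall y hy
        · right; exact hcr
      · right; exact ⟨a, b, h.1, hPa, hPb⟩

lemma myCross_last {R : α → α → Prop} {P : α → Prop} (q : List α) (hc : q.Chain' R)
    (x : α) (hx : x ∈ q) (hPx : P x) (hlast : ∀ z ∈ q.getLast?, ¬ P z) :
    ∃ a b, R a b ∧ P a ∧ ¬ P b := by
  obtain ⟨l, r, rfl⟩ := List.append_of_mem hx
  have hc' : (x :: r).Chain' R := hc.right_of_append
  rcases myCross_head (x :: r) hc' (by intro z hz; simp at hz; subst hz; exact hPx)
    with hall | hcr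
  · exfalso
    have hne : x :: r ≠ [] := by simp
    have hlast2 : (l ++ x :: r).getLast? = (x :: r).getLast? := by
      rw [List.getLast?_append_of_ne_nil] ; exact hne
    have hz := List.getLast?_eq_getLast hne
    have hzm : (x :: r).getLast hne ∈ x :: r := List.getLast_mem hne
    exact hlast _ (by rw [hlast2, hz]; rfl) (hall _ hzm)
  · exact hcr

end Helpers

lemma myFibers {k : ℕ} (s : Finset (ℕ × ℕ)) (f : ℕ × ℕ → Fin k)
    (hfib : ∀ b : Fin k, ∃ a ∈ s, f a = b) (hcard : s.card ≤ k) :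
    (∀ b : Fin k, (s.filter fun a => f a = b).card = 1) ∧ s.card = k := by
  classical
  have hsum : ∑ b : Fin k, (s.filter fun a => f a = b).card = s.card :=
    (Finset.card_eq_sum_card_fiberwise (fun x _ => Finset.mem_univ (f x))).symm
  have hge : ∀ b : Fin k, 1 ≤ (s.filter fun a => f a = b).card := by
    intro b
    obtain ⟨a, ha, hfa⟩ := hfib b
    exact Finset.card_pos.mpr ⟨a, Finset.mem_filter.mpr ⟨ha, hfa⟩⟩
  have hk' : k ≤ s.card := by
    calc k = ∑ _b : Fin k, 1 := by simp
    _ ≤ ∑ b : Fin k, (s.filter fun a => f a = b).card := Finset.sum_le_sum (fun b _ => hge b)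
    _ = s.card := hsum
  have hcardeq : s.card = k := le_antisymm hcard hk'
  refine ⟨?_, hcardeq⟩
  intro b
  by_contra hb
  have hlt : ∑ _b : Fin k, 1 < ∑ b : Fin k, (s.filter fun a => f a = b).card :=
    Finset.sum_lt_sum (fun i _ => hge i) ⟨b, Finset.mem_univ b, by have := hge b; omega⟩
  rw [hsum] at hlt
  simp at hlt
  omega

lemma myHall {k : ℕ} (F : Finset (Fin k × Fin k)) (hF : F.card ≤ k)
    (hrow : ¬ ∃ i : Fin k, ∀ a ∈ F, a.1 = i) (hcol : ¬ ∃ j : Fin k, ∀ a ∈ F, a.2 = j) :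
    ∃ σ : Equiv.Perm (Fin k), ∀ a ∈ F, σ a.2 ≠ a.1 := by
  classical
  set t : Fin k → Finset (Fin k) := fun j => Finset.univ.filter (fun i => (i, j) ∉ F) with ht
  have hall : ∀ S : Finset (Fin k), S.card ≤ (S.biUnion t).card := by
    intro S
    by_contra hS
    push_neg at hS
    set U := S.biUnion t with hU
    have hblock : Uᶜ ×ˢ S ⊆ F := by
      intro a ha
      rw [Finset.mem_product] at ha
      obtain ⟨ha1, ha2⟩ := ha
      rw [Finset.mem_compl] at ha1
      by_contra hnF
      exact ha1 (Finset.mem_biUnion.mpr ⟨a.2, ha2,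
        Finset.mem_filter.mpr ⟨Finset.mem_univ _, by simpa using hnF⟩⟩)
    have hUc : Uᶜ.card = k - U.card := by
      rw [Finset.card_compl, Fintype.card_fin]
    have hcardblock : (k - U.card) * S.card ≤ k := by
      calc (k - U.card) * S.card = (Uᶜ ×ˢ S).card := by
            rw [Finset.card_product, hUc]
      _ ≤ F.card := Finset.card_le_card hblock
      _ ≤ k := hF
    have hSk : S.card ≤ k := by
      have := Finset.card_le_univ S
      simpa using this
    have hs1 : 1 ≤ S.card := by omega
    have hUcard : U.card + 1 ≤ S.card := hS
    by_cases hse1 : S.card = 1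
    · -- full column
      have hU0 : U.card = 0 := by omega
      have hUe : U = ∅ := Finset.card_eq_zero.mp hU0
      obtain ⟨j, hj⟩ := Finset.card_eq_one.mp hse1
      have hsubF : Finset.univ ×ˢ S ⊆ F := by
        rw [hUe] at hblock
        simpa using hblock
      have hFeq : F = Finset.univ ×ˢ S := by
        apply Finset.eq_of_subset_of_card_le ?_ ?_ |>.symm
        · exact hsubF
        · rw [Finset.card_product, hse1]
          simpa using hF
      apply hcol
      refine ⟨j, fun a ha => ?_⟩
      rw [hFeq, Finset.mem_product, hj] at ha
      simpa using ha.2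
    · by_cases hsk : S.card = k
      · -- full row
        have hr1 : 1 ≤ Uᶜ.card := by omega
        obtain ⟨i, hi⟩ := Finset.card_pos.mp (by omega : 0 < Uᶜ.card)
        have hSuniv : S = Finset.univ := Finset.eq_univ_of_card S (by simpa using hsk)
        have hsubF : {i} ×ˢ (Finset.univ : Finset (Fin k)) ⊆ F := by
          intro a ha
          apply hblock
          rw [Finset.mem_product] at ha ⊢
          rw [hSuniv]
          exact ⟨by rw [Finset.mem_singleton.mp ha.1]; exact hi, Finset.mem_univ _⟩
        have hFeq : F = {i} ×ˢ (Finset.univ : Finset (Fin k)) := by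
          apply Finset.eq_of_subset_of_card_le ?_ ?_ |>.symm
          · exact hsubF
          · rw [Finset.card_product]
            simpa using hF
        apply hrow
        refine ⟨i, fun a ha => ?_⟩
        rw [hFeq, Finset.mem_product] at ha
        exact Finset.mem_singleton.mp ha.1
      · -- middle: contradiction by size
        exfalso
        obtain ⟨a, hsa⟩ : ∃ a, S.card = a + 2 := ⟨S.card - 2, by omega⟩
        obtain ⟨b, hkb⟩ : ∃ b, k = (a + 2) + (b + 1) := ⟨k - S.card - 1, by omega⟩
        have hr : b + 2 ≤ k - U.card := by omega
        have : (b + 2) * (a + 2) ≤ (k - U.card) * S.card :=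
          Nat.mul_le_mul hr (by omega)
        nlinarith [hcardblock]
  obtain ⟨f, hfinj, hft⟩ := (Finset.all_card_le_biUnion_card_iff_exists_injective t).mp hall
  have hbij : Function.Bijective f := Finite.injective_iff_bijective.mp hfinj
  refine ⟨Equiv.ofBijective f hbij, ?_⟩
  intro a haF h
  have h2 : (f a.2, a.2) ∉ F := by
    have := hft a.2
    rw [ht] at this
    exact (Finset.mem_filter.mp this).2
  apply h2
  have heq : (f a.2, a.2) = a := by
    have : f a.2 = a.1 := h
    rw [this]
  rw [heq]
  exact haF


lemma myDicycleInduce (D : Dgraph) (S : Finset ℕ) (p : List ℕ) (hp : D.IsDicycle p)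
    (hS : ∀ x ∈ p, x ∈ S) : (D.induce S).IsDicycle p := by
  obtain ⟨hlen, hnd, hv, hch, hwrap⟩ := hp
  refine ⟨hlen, hnd, ?_, ?_, ?_⟩
  · intro x hx
    exact Finset.mem_inter.mpr ⟨hv x hx, hS x hx⟩
  · have h := myChain'_mem (M := fun x => x ∈ S) p hch hS
    exact h.imp (fun a b hab => Finset.mem_filter.mpr ⟨hab.1, hab.2.1, hab.2.2⟩)
  · intro x y hx hy
    have hxp : x ∈ p := by
      have hne : p ≠ [] := by
        intro h; rw [h] at hx; simp at hx
      rw [List.getLast?_eq_getLast hne] at hx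
      rw [← Option.some_inj.mp hx]
      exact List.getLast_mem hne
    have hyp : y ∈ p := by
      cases p with
      | nil => simp at hy
      | cons a l =>
        simp only [List.head?_cons, Option.some_inj] at hy
        rw [← hy]; simp
    exact Finset.mem_filter.mpr ⟨hwrap x y hx hy, hS x hxp, hS y hyp⟩

lemma myCycleCross (D : Dgraph) (p : List ℕ) (hcyc : D.IsDicycle p) (P : ℕ → Prop)
    (hex : ∃ x ∈ p, P x) (hey : ∃ y ∈ p, ¬ P y) :
    ∃ a b, (a, b) ∈ D.arcs ∧ a ∈ p ∧ b ∈ p ∧ P a ∧ ¬ P b := by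
  obtain ⟨hlen, hnd, hv, hch, hwrap⟩ := hcyc
  obtain ⟨h, t, rfl⟩ : ∃ h t, p = h :: t := by
    cases p with
    | nil => simp at hlen
    | cons h t => exact ⟨h, t, rfl⟩
  have hpne : (h :: t) ≠ [] := by simp
  set q : List ℕ := (h :: t) ++ [h] with hq
  have hmemq : ∀ x ∈ q, x ∈ h :: t := by
    intro x hxq
    rcases List.mem_append.mp hxq with h1 | h1
    · exact h1
    · simp at h1; subst h1; simp
  have hchq0 : q.Chain' (fun a b => (a, b) ∈ D.arcs) := by
    rw [hq]
    simp only [List.Chain', List.isChain_append]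
    refine ⟨hch, List.isChain_singleton _, ?_⟩
    intro x hx' y hy'
    simp only [List.head?_cons, Option.mem_def, Option.some_inj] at hy'
    subst hy'
    exact hwrap x h hx' rfl
  have hchq : q.Chain' (fun a b => ((a, b) ∈ D.arcs ∧ a ∈ h :: t ∧ b ∈ h :: t)) :=
    myChain'_mem q hchq0 hmemq
  have hheadq : q.head? = some h := rfl
  have hlastq : q.getLast? = some h := List.getLast?_concat
  by_cases hPh : P h
  · rcases myCross_head (R := fun a b => ((a, b) ∈ D.arcs ∧ a ∈ h :: t ∧ b ∈ h :: t))
      q hchq (by intro z hz; rw [hheadq] at hz; simp at hz; subst hz; exact hPh)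
      with hall | hcr
    · exfalso
      obtain ⟨y, hy, hPy⟩ := hey
      exact hPy (hall y (List.mem_append_left _ hy))
    · obtain ⟨a, b, ⟨harc, hap, hbp⟩, hPa, hPb⟩ := hcr
      exact ⟨a, b, harc, hap, hbp, hPa, hPb⟩
  · obtain ⟨x, hxp, hPx⟩ := hex
    obtain ⟨a, b, ⟨harc, hap, hbp⟩, hPa, hPb⟩ :=
      myCross_last (R := fun a b => ((a, b) ∈ D.arcs ∧ a ∈ h :: t ∧ b ∈ h :: t))
        q hchq x (List.mem_append_left _ hxp) hPx
        (by intro z hz; rw [hlastq] at hz; simp at hz; subst hz; exact hPh)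
    exact ⟨a, b, harc, hap, hbp, hPa, hPb⟩

lemma myKey {k : ℕ} (hk : 1 ≤ k) (D : Dgraph) (hchi : k + 1 ≤ D.dichi)
    (X1 : Finset ℕ) (φ1 φ2 : ℕ → Fin k)
    (h1 : (D.induce X1).IsDicolouring k φ1)
    (h2 : (D.induce (D.verts \ X1)).IsDicolouring k φ2)
    (σ : Equiv.Perm (Fin k)) :
    ∃ (c : Fin k) (u v : ℕ), (u, v) ∈ D.dicutArcs X1 ∧ φ1 u = c ∧ σ (φ2 v) = c ∧
      ∃ s t, (s, t) ∈ D.arcs ∧ s ∈ D.verts \ X1 ∧ t ∈ X1 ∧ σ (φ2 s) = c ∧ φ1 t = c := by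
  classical
  have hnd : ¬ D.IsDicolouring k (fun x => if x ∈ X1 then φ1 x else σ (φ2 x)) := by
    intro h
    have hle : D.dichi ≤ k := by
      rw [Dgraph.dichi]
      exact Nat.sInf_le ⟨_, h⟩
    omega
  rw [Dgraph.IsDicolouring] at hnd
  push_neg at hnd
  obtain ⟨p, hp, c, hmono⟩ := hnd
  have hverts : ∀ x ∈ p, x ∈ D.verts := hp.2.2.1
  have hx1 : ∃ x ∈ p, x ∈ X1 := by
    by_contra hcon
    push_neg at hcon
    have hcyc2 := myDicycleInduce D (D.verts \ X1) p hp
      (fun x hx => Finset.mem_sdiff.mpr ⟨hverts x hx, hcon x hx⟩)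
    refine h2 p hcyc2 ⟨σ.symm c, fun x hx => ?_⟩
    have hm := hmono x hx
    simp only [if_neg (hcon x hx)] at hm
    exact (Equiv.eq_symm_apply σ).mpr hm
  have hx2 : ∃ y ∈ p, y ∉ X1 := by
    by_contra hcon
    push_neg at hcon
    refine h1 p (myDicycleInduce D X1 p hp hcon) ⟨c, fun x hx => ?_⟩
    have hm := hmono x hx
    simpa only [if_pos (hcon x hx)] using hm
  obtain ⟨u, v, huvarc, hup, hvp, hu1, hv1⟩ := myCycleCross D p hp (· ∈ X1) hx1 hx2
  obtain ⟨s, t, hstarc, hsp, htp, hs1, ht1'⟩ := myCycleCross D p hp (· ∉ X1) hx2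
    (by obtain ⟨x, hx, hxX⟩ := hx1; exact ⟨x, hx, not_not_intro hxX⟩)
  have ht1 : t ∈ X1 := not_not.mp ht1'
  refine ⟨c, u, v, Finset.mem_filter.mpr ⟨huvarc, hu1, hv1⟩, ?_, ?_, s, t, hstarc,
    Finset.mem_sdiff.mpr ⟨hverts s hsp, hs1⟩, ht1, ?_, ?_⟩
  · have hm := hmono u hup; simpa only [if_pos hu1] using hm
  · have hm := hmono v hvp; simpa only [if_neg hv1] using hm
  · have hm := hmono s hsp; simpa only [if_neg hs1] using hm
  · have hm := hmono t htp; simpa only [if_pos ht1] using hm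

/-- Lemma 3.3: structure of k-dicolourings across a dicut of
size at most k in a digraph with dichromatic number at least k + 1. -/
theorem statement_1 (k : ℕ) (hk : 1 ≤ k) (D : Dgraph) (hWF : D.WF)
    (hchi : k + 1 ≤ D.dichi)
    (X1 : Finset ℕ) (hsub : X1 ⊆ D.verts) (hne : X1.Nonempty) (hproper : X1 ≠ D.verts)
    (hsize : (D.dicutArcs X1).card ≤ k)
    (φ1 φ2 : ℕ → Fin k)
    (h1 : (D.induce X1).IsDicolouring k φ1)
    (h2 : (D.induce (D.verts \ X1)).IsDicolouring k φ2) :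
    (((∃! i : Fin k, ∀ a ∈ D.dicutArcs X1, φ1 a.1 = i) ∧
        ∀ i : Fin k, (∀ a ∈ D.dicutArcs X1, φ1 a.1 = i) → ∀ j : Fin k,
          ((D.dicutArcs X1).filter fun a => φ1 a.1 = i ∧ φ2 a.2 = j).card = 1 ∧
          (D.arcs.filter fun a =>
            a.1 ∈ D.verts \ X1 ∧ a.2 ∈ X1 ∧ φ2 a.1 = j ∧ φ1 a.2 = i).Nonempty) ∨
      ((∃! j : Fin k, ∀ a ∈ D.dicutArcs X1, φ2 a.2 = j) ∧
        ∀ j : Fin k, (∀ a ∈ D.dicutArcs X1, φ2 a.2 = j) → ∀ i : Fin k,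
          ((D.dicutArcs X1).filter fun a => φ1 a.1 = i ∧ φ2 a.2 = j).card = 1 ∧
          (D.arcs.filter fun a =>
            a.1 ∈ D.verts \ X1 ∧ a.2 ∈ X1 ∧ φ2 a.1 = j ∧ φ1 a.2 = i).Nonempty)) ∧
    (D.dicutArcs X1).card = k := by
  classical
  set Dc := D.dicutArcs X1 with hDcdef
  have key := fun σ => myKey hk D hchi X1 φ1 φ2 h1 h2 σ
  have hne_dc : Dc.Nonempty := by
    obtain ⟨c, u, v, huv, _⟩ := key (Equiv.refl _)
    exact ⟨(u, v), huv⟩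
  by_cases hrow : ∃ i : Fin k, ∀ a ∈ Dc, φ1 a.1 = i
  · obtain ⟨i, hi⟩ := hrow
    have hfib : ∀ j : Fin k, ∃ a ∈ Dc, φ2 a.2 = j := by
      intro j
      obtain ⟨c, u, v, huv, hu, hv, -⟩ := key (Equiv.swap j i)
      have hc : c = i := by rw [← hu, hi _ huv]
      have hj2 : φ2 v = j := by
        apply (Equiv.swap j i).injective
        rw [hv, hc, Equiv.swap_apply_left]
      exact ⟨(u, v), huv, hj2⟩
    obtain ⟨hone, hcard⟩ := myFibers Dc (fun a => φ2 a.2) hfib hsize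
    refine ⟨Or.inl ⟨⟨i, hi, fun i' hi' => ?_⟩, ?_⟩, hcard⟩
    · obtain ⟨a, ha⟩ := hne_dc
      rw [← hi' a ha, hi a ha]
    · intro i₀ hi₀ j
      constructor
      · have hfe : Dc.filter (fun a => φ1 a.1 = i₀ ∧ φ2 a.2 = j)
            = Dc.filter (fun a => φ2 a.2 = j) :=
          Finset.filter_congr (fun a ha => by simp [hi₀ a ha])
        rw [hfe, hone j]
      · obtain ⟨c, u, v, huv, hu, hv, s, t, hst, hs, ht, hφs, hφt⟩ := key (Equiv.swap j i₀)
        have hc : c = i₀ := by rw [← hu, hi₀ _ huv]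
        have hφsj : φ2 s = j := by
          apply (Equiv.swap j i₀).injective
          rw [hφs, hc, Equiv.swap_apply_left]
        exact ⟨(s, t), Finset.mem_filter.mpr ⟨hst, hs, ht, hφsj, by rw [hφt, hc]⟩⟩
  · by_cases hcol : ∃ j : Fin k, ∀ a ∈ Dc, φ2 a.2 = j
    · obtain ⟨j, hj⟩ := hcol
      have hfib : ∀ i : Fin k, ∃ a ∈ Dc, φ1 a.1 = i := by
        intro i
        obtain ⟨c, u, v, huv, hu, hv, -⟩ := key (Equiv.swap j i)
        have hc : c = i := by rw [← hv, hj _ huv, Equiv.swap_apply_left]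
        exact ⟨(u, v), huv, by rw [hu, hc]⟩
      obtain ⟨hone, hcard⟩ := myFibers Dc (fun a => φ1 a.1) hfib hsize
      refine ⟨Or.inr ⟨⟨j, hj, fun j' hj' => ?_⟩, ?_⟩, hcard⟩
      · obtain ⟨a, ha⟩ := hne_dc
        rw [← hj' a ha, hj a ha]
      · intro j₀ hj₀ i
        constructor
        · have hfe : Dc.filter (fun a => φ1 a.1 = i ∧ φ2 a.2 = j₀)
              = Dc.filter (fun a => φ1 a.1 = i) :=
            Finset.filter_congr (fun a ha => by simp [hj₀ a ha])
          rw [hfe, hone i]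
        · obtain ⟨c, u, v, huv, hu, hv, s, t, hst, hs, ht, hφs, hφt⟩ := key (Equiv.swap j₀ i)
          have hc : c = i := by rw [← hv, hj₀ _ huv, Equiv.swap_apply_left]
          have hφsj : φ2 s = j₀ := by
            apply (Equiv.swap j₀ i).injective
            rw [hφs, hc, Equiv.swap_apply_left]
          exact ⟨(s, t), Finset.mem_filter.mpr ⟨hst, hs, ht, hφsj, by rw [hφt, hc]⟩⟩
    · exfalso
      set F := Dc.image (fun a => (φ1 a.1, φ2 a.2)) with hFdef
      have hFcard : F.card ≤ k := le_trans Finset.card_image_le hsize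
      have hFrow : ¬ ∃ i : Fin k, ∀ a ∈ F, a.1 = i := by
        rintro ⟨i, hi⟩
        exact hrow ⟨i, fun a ha => hi _ (Finset.mem_image_of_mem _ ha)⟩
      have hFcol : ¬ ∃ j : Fin k, ∀ a ∈ F, a.2 = j := by
        rintro ⟨j, hj⟩
        exact hcol ⟨j, fun a ha => hj _ (Finset.mem_image_of_mem _ ha)⟩
      obtain ⟨σ, hσ⟩ := myHall F hFcard hFrow hFcol
      obtain ⟨c, u, v, huv, hu, hv, -⟩ := key σ
      exact hσ (φ1 u, φ2 v) (Finset.mem_image_of_mem _ huv) (hv.trans hu.symm)
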